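/- arXiv:2309.07965 — 7 statements merged into one kernel-verified Lean document; each statement's English description precedes it below -/
import Mathlib

section
/- The relative Lipschitz saturation A*_{B,R} is an R-subalgebra of B containing g(A). -/
/-!
`x` lies in the integral closure of `I` iff `x t` is integral over the Rees algebra
`S[I t] ⊆ S[t]`; as integral elements form a subring, the integral closure of an ideal is an
ideal. Since `Δ` is additive, kills `R` and satisfies `Δ(xy) = (x ⊗ 1) Δy + (1 ⊗ y) Δx`, the
preimage under `Δ` of any ideal of `B ⊗[R] B` is an `R`-subalgebra. Finally `φ ∘ Δ_R = Δ_A`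
kills `g(A)`, so `Δ(g(A)) ⊆ ker φ`, which lies in its integral closure.
-/

open TensorProduct

/-- Integral closure of an ideal: `x` satisfies an equation of integral dependence over `I`. -/
def Ideal.intClosure {S : Type*} [CommRing S] (I : Ideal S) : Set S :=
  {x | ∃ n : ℕ, 0 < n ∧ ∃ a : ℕ → S, (∀ i ∈ Finset.Icc 1 n, a i ∈ I ^ i) ∧
      x ^ n + ∑ i ∈ Finset.Icc 1 n, a i * x ^ (n - i) = 0}

variable (R A B : Type*) [CommRing R] [CommRing A] [CommRing B]
  [Algebra R A] [Algebra R B] [Algebra A B] [IsScalarTower R A B]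

/-- The diagonal map `b ↦ b ⊗ 1 - 1 ⊗ b`. -/
noncomputable def lipDelta (b : B) : B ⊗[R] B := b ⊗ₜ[R] 1 - 1 ⊗ₜ[R] b

/-- The canonical morphism `B ⊗[R] B → B ⊗[A] B`. -/
noncomputable def lipPhi : B ⊗[R] B →ₐ[R] B ⊗[A] B :=
  Algebra.TensorProduct.lift
    ((Algebra.TensorProduct.includeLeft : B →ₐ[A] B ⊗[A] B).restrictScalars R)
    ((Algebra.TensorProduct.includeRight : B →ₐ[A] B ⊗[A] B).restrictScalars R)
    (fun _ _ => Commute.all _ _)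

/-- The relative Lipschitz saturation of `A` in `B` over `R`. -/
noncomputable def lipSat : Set B :=
  {x | lipDelta R B x ∈ (RingHom.ker (lipPhi R A B)).intClosure}

theorem Finset.sum_range_eq_sum_Icc_sub {M : Type*} [AddCommMonoid M] (f : ℕ → M) (n : ℕ) :
    ∑ i ∈ range n, f i = ∑ j ∈ Icc 1 n, f (n - j) := by
  rw [← Finset.Ico_add_one_right_eq_Icc, Finset.sum_Ico_reflect f 1 le_rfl, Nat.sub_self,
    Nat.add_sub_cancel, Nat.Ico_zero_eq_range]

open Polynomial in
theorem Polynomial.coeff_aeval_monomial_one_natDegree {S T : Type*} [CommSemiring S]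
    [CommSemiring T] [Algebra T S[X]] (p : T[X]) (x : S) :
    (aeval (monomial 1 x) p).coeff p.natDegree =
      ∑ i ∈ Finset.range (p.natDegree + 1),
        (algebraMap T S[X] (p.coeff i)).coeff (p.natDegree - i) * x ^ i := by
  rw [aeval_eq_sum_range, finsetSum_coeff]
  refine Finset.sum_congr rfl fun i hi => ?_
  rw [Algebra.smul_def, monomial_pow, one_mul,
    ← Nat.sub_add_cancel (Nat.lt_succ_iff.mp (Finset.mem_range.mp hi)), coeff_mul_monomial,
    Nat.add_sub_cancel]

namespace Ideal
open Polynomial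

variable {S : Type*} [CommRing S] {I : Ideal S} {x : S}

theorem mem_intClosure_iff_exists :
    x ∈ I.intClosure ↔ ∃ n : ℕ, ∃ a : ℕ → S, (∀ i ∈ Finset.Icc 1 n, a i ∈ I ^ i) ∧
      x ^ n + ∑ i ∈ Finset.Icc 1 n, a i * x ^ (n - i) = 0 := by
  refine ⟨fun ⟨n, _, h⟩ => ⟨n, h⟩, fun ⟨n, a, ha, h⟩ => ?_⟩
  rcases n.eq_zero_or_pos with rfl | hn
  · have : Subsingleton S := subsingleton_of_zero_eq_one (by simpa using h.symm)
    exact ⟨1, one_pos, 0, fun _ _ => zero_mem _, Subsingleton.elim _ _⟩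
  · exact ⟨n, hn, a, ha, h⟩

theorem mem_intClosure_of_isIntegral (h : IsIntegral (reesAlgebra I) (monomial 1 x)) :
    x ∈ I.intClosure := by
  obtain ⟨p, hp, hpx⟩ := h
  -- the equation of integral dependence is the top-degree coefficient of `p(x t) = 0`
  have hcoeff := coeff_aeval_monomial_one_natDegree p x
  rw [aeval_def, hpx, coeff_zero, Finset.sum_range_succ, hp.coeff_natDegree, Nat.sub_self,
    map_one, coeff_one_zero, one_mul, add_comm, Finset.sum_range_eq_sum_Icc_sub] at hcoeff
  refine mem_intClosure_iff_exists.mpr ⟨p.natDegree,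
    fun j => (p.coeff (p.natDegree - j) : S[X]).coeff j, fun j _ => (p.coeff _).2 j, ?_⟩
  refine (congrArg _ (Finset.sum_congr rfl fun j hj => ?_)).trans hcoeff.symm
  rw [Nat.sub_sub_self (Finset.mem_Icc.mp hj).2]
  rfl

theorem isIntegral_of_mem_intClosure (h : x ∈ I.intClosure) :
    IsIntegral (reesAlgebra I) (monomial 1 x) := by
  obtain ⟨n, -, a, ha, hx⟩ := h
  let c (i : Finset.Icc 1 n) : reesAlgebra I :=
    ⟨monomial i (a i), reesAlgebra.monomial_mem.mpr (ha i i.2)⟩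
  have hdeg : (∑ i : Finset.Icc 1 n, C (c i) * X ^ (n - i)).degree < (n : WithBot ℕ) := by
    refine (degree_sum_le _ _).trans_lt <|
      (Finset.sup_lt_iff (WithBot.bot_lt_coe n)).mpr fun i _ => ?_
    obtain ⟨hi1, hin⟩ := Finset.mem_Icc.mp i.2
    exact (degree_C_mul_X_pow_le _ _).trans_lt (Nat.cast_lt.mpr (Nat.sub_lt_self hi1 hin))
  have heval (i : Finset.Icc 1 n) :
      aeval (monomial 1 x) (C (c i) * X ^ (n - i)) = monomial n (a i * x ^ (n - i)) := by
    rw [map_mul, aeval_C, map_pow, aeval_X, monomial_pow, one_mul]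
    exact (monomial_mul_monomial _ _ _ _).trans
      (by rw [Nat.add_sub_cancel' (Finset.mem_Icc.mp i.2).2])
  refine ⟨_, monic_X_pow_add hdeg, ?_⟩
  rw [← aeval_def, map_add, map_pow, aeval_X, map_sum, monomial_pow, one_mul]
  simp only [heval]
  rw [← map_sum, ← map_add, Finset.sum_coe_sort (Finset.Icc 1 n) fun i => a i * x ^ (n - i),
    hx, map_zero]

theorem mem_intClosure_iff_isIntegral :
    x ∈ I.intClosure ↔ IsIntegral (reesAlgebra I) (monomial 1 x) :=
  ⟨isIntegral_of_mem_intClosure, mem_intClosure_of_isIntegral⟩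

theorem isIntegral_monomial_one_mul (b : S) (h : IsIntegral (reesAlgebra I) (monomial 1 x)) :
    IsIntegral (reesAlgebra I) (monomial 1 (b * x)) := by
  have hb : IsIntegral (reesAlgebra I) (C b) :=
    isIntegral_algebraMap (x := (⟨C b, (reesAlgebra I).algebraMap_mem b⟩ : reesAlgebra I))
  simpa only [C_mul_monomial] using hb.mul h

variable (I) in
def intClosureIdeal : Ideal S where
  carrier := I.intClosure
  add_mem' {x y} hx hy := by
    rw [mem_intClosure_iff_isIntegral, map_add]
    exact (mem_intClosure_iff_isIntegral.mp hx).add (mem_intClosure_iff_isIntegral.mp hy)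
  zero_mem' := by
    rw [mem_intClosure_iff_isIntegral, map_zero]
    exact isIntegral_zero
  smul_mem' b _ hx := mem_intClosure_iff_isIntegral.mpr <|
    isIntegral_monomial_one_mul b (mem_intClosure_iff_isIntegral.mp hx)

theorem le_intClosureIdeal : I ≤ I.intClosureIdeal := fun x hx =>
  mem_intClosure_iff_exists.mpr ⟨1, fun _ => -x, by simpa using neg_mem hx, by simp⟩

end Ideal

section LipschitzSaturation

variable {R A B}

theorem lipDelta_add (x y : B) :
    lipDelta R B (x + y) = lipDelta R B x + lipDelta R B y := by
  simp only [lipDelta, add_tmul, tmul_add]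
  abel

theorem lipDelta_mul (x y : B) :
    lipDelta R B (x * y) = (x ⊗ₜ[R] 1) * lipDelta R B y + (1 ⊗ₜ[R] y) * lipDelta R B x := by
  simp only [lipDelta, mul_sub, Algebra.TensorProduct.tmul_mul_tmul, mul_one, one_mul, mul_comm y]
  abel

theorem lipDelta_algebraMap (r : R) : lipDelta R B (algebraMap R B r) = 0 := by
  rw [lipDelta, Algebra.algebraMap_eq_smul_one, smul_tmul, sub_self]

theorem lipPhi_lipDelta (b : B) : lipPhi R A B (lipDelta R B b) = lipDelta A B b := by
  simp only [lipDelta, lipPhi, map_sub, Algebra.TensorProduct.lift_tmul,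
    AlgHom.coe_restrictScalars', Algebra.TensorProduct.includeLeft_apply,
    Algebra.TensorProduct.includeRight_apply, Algebra.TensorProduct.tmul_mul_tmul, mul_one,
    one_mul]

theorem lipDelta_algebraMap_mem_ker_lipPhi (a : A) :
    lipDelta R B (algebraMap A B a) ∈ RingHom.ker (lipPhi R A B) := by
  rw [RingHom.mem_ker, lipPhi_lipDelta, lipDelta_algebraMap]

variable (R B) in
def Subalgebra.comapLipDelta (J : Ideal (B ⊗[R] B)) : Subalgebra R B where
  carrier := lipDelta R B ⁻¹' J
  add_mem' {x y} hx hy := by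
    rw [Set.mem_preimage, lipDelta_add]
    exact J.add_mem hx hy
  mul_mem' {x y} hx hy := by
    rw [Set.mem_preimage, lipDelta_mul]
    exact J.add_mem (J.mul_mem_left _ hy) (J.mul_mem_left _ hx)
  algebraMap_mem' r := by
    rw [Set.mem_preimage, lipDelta_algebraMap]
    exact J.zero_mem

end LipschitzSaturation

/-- The relative Lipschitz saturation `A*_{B,R}` is an `R`-subalgebra of `B`
containing `g(A)`. -/
theorem lipSat_isSubalgebra :
    ∃ S : Subalgebra R B, (S : Set B) = lipSat R A B ∧
      Set.range (algebraMap A B) ⊆ (S : Set B) := by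
  refine ⟨Subalgebra.comapLipDelta R B (RingHom.ker (lipPhi R A B)).intClosureIdeal, rfl, ?_⟩
  rintro _ ⟨a, rfl⟩
  exact Ideal.le_intClosureIdeal (lipDelta_algebraMap_mem_ker_lipPhi a)
end

section
/- If A ⊆ C ⊆ B is a chain of R-subalgebra inclusions, then A*_{B,R} ⊆ C*_{B,R}. -/
open TensorProduct

variable (R A B : Type*) [CommRing R] [CommRing A] [CommRing B]
  [Algebra R A] [Algebra R B] [Algebra A B] [IsScalarTower R A B]

/-! Since `A`-scalars already move across `⊗[C]` when `A ≤ C`, the map `B ⊗[R] B → B ⊗[C] B`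
factors through `B ⊗[A] B`; hence its kernel contains that of `B ⊗[R] B → B ⊗[A] B`, and the
integral closure of an ideal is monotone in the ideal. -/

theorem Ideal.intClosure_mono {S : Type*} [CommRing S] {I J : Ideal S} (hIJ : I ≤ J) :
    I.intClosure ⊆ J.intClosure := fun _ ⟨n, hn, a, ha, hx⟩ =>
  ⟨n, hn, a, fun i hi => Ideal.pow_right_mono hIJ i (ha i hi), hx⟩

theorem Subalgebra.compatibleSMul_of_le {S T M N : Type*} [CommRing S] [CommRing T] [Algebra S T]
    [AddCommGroup M] [Module T M] [AddCommGroup N] [Module T N]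
    {A C : Subalgebra S T} (hAC : A ≤ C) : CompatibleSMul C A M N where
  smul_tmul a m n := by
    have hsmul (x : M) : a • x = (⟨a, hAC a.2⟩ : C) • x := rfl
    have hsmul' (x : N) : a • x = (⟨a, hAC a.2⟩ : C) • x := rfl
    rw [hsmul, hsmul', TensorProduct.smul_tmul]

theorem lipPhi_ker_le (C : Type*) [CommRing C] [Algebra R C] [Algebra C B] [IsScalarTower R C B]
    [CompatibleSMul C A B B] : RingHom.ker (lipPhi R A B) ≤ RingHom.ker (lipPhi R C B) := by
  have hcomp : (Algebra.TensorProduct.mapOfCompatibleSMul C A R B B).comp (lipPhi R A B) =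
      lipPhi R C B := by
    ext <;> simp [lipPhi]
  intro y hy
  rw [RingHom.mem_ker, ← hcomp, AlgHom.comp_apply, (RingHom.mem_ker).1 hy, map_zero]

/-- If `A ⊆ C ⊆ B` is a chain of `R`-subalgebras of `B`, then
`A*_{B,R} ⊆ C*_{B,R}`. -/
theorem lipSat_mono_of_le {R' B' : Type*} [CommRing R'] [CommRing B'] [Algebra R' B']
    (A' C' : Subalgebra R' B') (hAC : A' ≤ C') :
    lipSat R' A' B' ⊆ lipSat R' C' B' :=
  have := Subalgebra.compatibleSMul_of_le (M := B') (N := B') hAC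
  fun _ hx => Ideal.intClosure_mono (lipPhi_ker_le R' A' B' C') hx
end

section
/- Functoriality of Lipschitz saturation: given a commutative diagram of ring morphisms with rows R → A →g B and R' → A' →g' B' and vertical maps f_R : R → R', f_A : A → A', f : B → B' making everything commute, one has f(A*_{B,R}) ⊆ (A')*_{B',R'}. -/
open TensorProduct

variable (R A B : Type*) [CommRing R] [CommRing A] [CommRing B]
  [Algebra R A] [Algebra R B] [Algebra A B] [IsScalarTower R A B]

/-! The diagram induces ring maps `B ⊗[R] B → B' ⊗[R'] B'` and `B ⊗[A] B → B' ⊗[A'] B'`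
that commute with the canonical maps `lipPhi`, so the first one sends the kernel of
`lipPhi R A B` into that of `lipPhi R' A' B'` and `x ⊗ 1 - 1 ⊗ x` to `f x ⊗ 1 - 1 ⊗ f x`.
A ring map carrying one ideal into another carries an equation of integral dependence over
the first to one over the second. -/

theorem Ideal.map_mem_intClosure {S T : Type*} [CommRing S] [CommRing T] (φ : S →+* T)
    {I : Ideal S} {J : Ideal T} (hIJ : I.map φ ≤ J) {x : S} (hx : x ∈ I.intClosure) :
    φ x ∈ J.intClosure := by
  obtain ⟨n, hn, a, ha, heq⟩ := hx
  refine ⟨n, hn, fun i => φ (a i), fun i hi => ?_, ?_⟩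
  · exact Ideal.pow_right_mono hIJ i (Ideal.map_pow φ I i ▸ Ideal.mem_map_of_mem φ (ha i hi))
  · simpa only [map_add, map_pow, map_sum, map_mul, map_zero] using congrArg φ heq

@[simp]
theorem lipPhi_tmul (b c : B) : lipPhi R A B (b ⊗ₜ[R] c) = b ⊗ₜ[A] c := by
  simp [lipPhi]

section Functoriality

open Algebra.TensorProduct

variable {R B} {R' B' : Type*} [CommRing R'] [CommRing B'] [Algebra R' B']
  (fR : R →+* R') (f : B →+* B') (hf : f.comp (algebraMap R B) = (algebraMap R' B').comp fR)

theorem mapRingHom_lipDelta (x : B) :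
    mapRingHom fR f f hf hf (lipDelta R B x) = lipDelta R' B' (f x) := by
  simp [lipDelta]

variable {A' : Type*} [CommRing A'] [Algebra R' A'] [Algebra A' B'] [IsScalarTower R' A' B']

theorem lipPhi_comp_mapRingHom (fA : A →+* A')
    (hfA : f.comp (algebraMap A B) = (algebraMap A' B').comp fA) :
    (lipPhi R' A' B' : B' ⊗[R'] B' →+* B' ⊗[A'] B').comp (mapRingHom fR f f hf hf) =
      (mapRingHom fA f f hfA hfA).comp (lipPhi R A B : B ⊗[R] B →+* B ⊗[A] B) := by
  ext <;> simp

theorem map_ker_lipPhi_le (fA : A →+* A')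
    (hfA : f.comp (algebraMap A B) = (algebraMap A' B').comp fA) :
    (RingHom.ker (lipPhi R A B)).map (mapRingHom fR f f hf hf) ≤
      RingHom.ker (lipPhi R' A' B') := by
  refine Ideal.map_le_iff_le_comap.mpr fun y hy => ?_
  rw [RingHom.mem_ker] at hy
  exact (RingHom.congr_fun (lipPhi_comp_mapRingHom A fR f hf fA hfA) y).trans (by simp [hy])

end Functoriality

theorem RingHom.comp_algebraMap_of_tower {R A B R' A' B' : Type*} [CommRing R] [CommRing A]
    [CommRing B] [Algebra R A] [Algebra R B] [Algebra A B] [IsScalarTower R A B]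
    [CommRing R'] [CommRing A'] [CommRing B'] [Algebra R' A'] [Algebra R' B'] [Algebra A' B']
    [IsScalarTower R' A' B'] {fR : R →+* R'} {fA : A →+* A'} {f : B →+* B'}
    (h₁ : fA.comp (algebraMap R A) = (algebraMap R' A').comp fR)
    (h₂ : f.comp (algebraMap A B) = (algebraMap A' B').comp fA) :
    f.comp (algebraMap R B) = (algebraMap R' B').comp fR := by
  rw [IsScalarTower.algebraMap_eq R A B, IsScalarTower.algebraMap_eq R' A' B',
    ← RingHom.comp_assoc, h₂, RingHom.comp_assoc, h₁, RingHom.comp_assoc]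

/-- Functoriality of the relative Lipschitz saturation: a commutative diagram of ring
morphisms between the sequences `R → A → B` and `R' → A' → B'` maps `A*_{B,R}`
into `(A')*_{B',R'}`. -/
theorem lipSat_functorial (R' A' B' : Type*) [CommRing R'] [CommRing A'] [CommRing B']
    [Algebra R' A'] [Algebra R' B'] [Algebra A' B'] [IsScalarTower R' A' B']
    (fR : R →+* R') (fA : A →+* A') (f : B →+* B')
    (h₁ : fA.comp (algebraMap R A) = (algebraMap R' A').comp fR)
    (h₂ : f.comp (algebraMap A B) = (algebraMap A' B').comp fA) :
    f '' lipSat R A B ⊆ lipSat R' A' B' := by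
  rintro _ ⟨x, hx, rfl⟩
  have hR := RingHom.comp_algebraMap_of_tower h₁ h₂
  have := Ideal.map_mem_intClosure _ (map_ker_lipPhi_le A fR f hR fA h₂) hx
  rwa [mapRingHom_lipDelta] at this
end

section
/- A ring morphism h : S → T is radicial (any two distinct morphisms from T into a field have distinct compositions with h) if and only if t ⊗_S 1 − 1 ⊗_S t is nilpotent in T ⊗_S T for every t ∈ T. -/
open TensorProduct

universe v

/-!
Two ring morphisms `δ₁, δ₂ : T → K` agreeing on `S` are the same thing as one morphism
`T ⊗[S] T → K`, which sends `t ⊗ 1 - 1 ⊗ t` to `δ₁ t - δ₂ t`. If these elements are nilpotent,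
their images in a field vanish. Conversely, an element that is not nilpotent avoids some prime
ideal, so it survives in the corresponding residue field, and the two inclusions
`T → T ⊗[S] T` composed with this residue map are then distinct morphisms agreeing on `S`.
-/

theorem exists_ringHom_field_apply_ne_zero_of_not_isNilpotent {A : Type v} [CommRing A] {x : A}
    (hx : ¬IsNilpotent x) : ∃ (K : Type v) (_ : Field K) (φ : A →+* K), φ x ≠ 0 := by
  rw [nilpotent_iff_mem_prime] at hx
  push Not at hx
  obtain ⟨p, hp, hxp⟩ := hx
  exact ⟨p.ResidueField, inferInstance, algebraMap A p.ResidueField,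
    Ideal.algebraMap_residueField_eq_zero.not.mpr hxp⟩

theorem RingHom.eq_of_comp_algebraMap_eq_of_isNilpotent_tmul_sub_tmul {S T R : Type*}
    [CommRing S] [CommRing T] [CommRing R] [IsReduced R] [Algebra S T]
    (hT : ∀ t : T, IsNilpotent (t ⊗ₜ[S] 1 - 1 ⊗ₜ[S] t : T ⊗[S] T)) (δ₁ δ₂ : T →+* R)
    (hδ : δ₁.comp (algebraMap S T) = δ₂.comp (algebraMap S T)) : δ₁ = δ₂ := by
  let : Algebra S R := (δ₁.comp (algebraMap S T)).toAlgebra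
  let e₁ : T →ₐ[S] R := { δ₁ with commutes' := fun _ => rfl }
  let e₂ : T →ₐ[S] R := { δ₂ with commutes' := fun s => (RingHom.congr_fun hδ s).symm }
  let φ := Algebra.TensorProduct.lift e₁ e₂ fun _ _ => mul_comm _ _
  ext t
  have hφ : φ (t ⊗ₜ[S] 1 - 1 ⊗ₜ[S] t) = δ₁ t - δ₂ t := by
    rw [map_sub]
    change δ₁ t * δ₂ 1 - δ₁ 1 * δ₂ t = _
    rw [map_one, map_one, mul_one, one_mul]
  rw [← sub_eq_zero, ← hφ]
  exact ((hT t).map φ).eq_zero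

/-- A ring morphism `h : S → T` is radicial (any two distinct morphisms from `T` into
a field have distinct compositions with `h`) if and only if `t ⊗ 1 - 1 ⊗ t` is
nilpotent in `T ⊗[S] T` for every `t ∈ T`. -/
theorem radicial_iff_nilpotent_diff {S : Type*} (T : Type v) [CommRing S] [CommRing T]
    [Algebra S T] :
    (∀ (K : Type v) [Field K] (δ₁ δ₂ : T →+* K),
        δ₁.comp (algebraMap S T) = δ₂.comp (algebraMap S T) → δ₁ = δ₂) ↔
      ∀ t : T, IsNilpotent (t ⊗ₜ[S] 1 - 1 ⊗ₜ[S] t : T ⊗[S] T) := by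
  refine ⟨fun hT t => ?_, fun hT K _ =>
    RingHom.eq_of_comp_algebraMap_eq_of_isNilpotent_tmul_sub_tmul hT⟩
  by_contra hnil
  obtain ⟨K, _, φ, hφ⟩ := exists_ringHom_field_apply_ne_zero_of_not_isNilpotent hnil
  have hinc : φ.comp Algebra.TensorProduct.includeLeftRingHom = φ.comp
      (Algebra.TensorProduct.includeRight : T →ₐ[S] T ⊗[S] T).toRingHom :=
    hT K _ _ <| by
      rw [RingHom.comp_assoc, Algebra.TensorProduct.includeLeftRingHom_comp_algebraMap,
        RingHom.comp_assoc]
  apply hφ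
  rw [map_sub, sub_eq_zero]
  exact RingHom.congr_fun hinc t
end

section
/- Let R be a commutative ring with ideals I, J₁, …, J_n such that the product J₁⋯J_n is a nil ideal. If x ∈ R is integral over I modulo J_i for every i (i.e., the class of x in R/J_i is integral over the image of I), then x lies in the integral closure of I in R. -/
open Finset Polynomial

theorem Finset.sum_Icc_one_sub_eq_sum_range {M : Type*} [AddCommMonoid M] (g : ℕ → M) (m : ℕ) :
    ∑ k ∈ Icc 1 m, g (m - k) = ∑ j ∈ range m, g j := by
  rw [← Ico_add_one_right_eq_Icc, sum_Ico_reflect g 1 le_rfl, Nat.add_sub_cancel,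
    Nat.sub_self, Nat.Ico_zero_eq_range]

namespace Polynomial

variable {R : Type*} [CommRing R]

/-- `f = X ^ m + a₁ X ^ (m - 1) + ⋯ + aₘ` with `aₖ ∈ I ^ k`. Asking `natDegree f ≤ m` rather
than `f.Monic ∧ f.natDegree = m` keeps this meaningful over the zero ring. -/
def IsIntegralDependence (I : Ideal R) (m : ℕ) (f : R[X]) : Prop :=
  f.natDegree ≤ m ∧ f.coeff m = 1 ∧ ∀ j, f.coeff j ∈ I ^ (m - j)

variable {I : Ideal R}

theorem exists_isIntegralDependence_eval_eq {m : ℕ} {a : ℕ → R}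
    (ha : ∀ k ∈ Icc 1 m, a k ∈ I ^ k) (x : R) :
    ∃ f : R[X], IsIntegralDependence I m f ∧
      f.eval x = x ^ m + ∑ k ∈ Icc 1 m, a k * x ^ (m - k) := by
  classical
  set f : R[X] := X ^ m + ∑ k ∈ Icc 1 m, C (a k) * X ^ (m - k)
  have hcoeff : ∀ j, f.coeff j =
      (if j = m then 1 else 0) + ∑ k ∈ Icc 1 m, if j = m - k then a k else 0 := by
    intro j
    simp only [f, coeff_add, coeff_X_pow, finsetSum_coeff, coeff_C_mul_X_pow]
  refine ⟨f, ⟨?_, ?_, fun j => ?_⟩, by simp [f, eval_finsetSum]⟩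
  · refine natDegree_add_le_of_degree_le (natDegree_X_pow_le m)
      (natDegree_sum_le_of_forall_le _ _ fun k _ => ?_)
    exact (natDegree_C_mul_X_pow_le _ _).trans (Nat.sub_le m k)
  · rw [hcoeff, if_pos rfl, sum_eq_zero fun k hk => if_neg (by simp at hk; omega), add_zero]
  · rw [hcoeff]
    refine add_mem ?_ (Ideal.sum_mem _ fun k hk => ?_)
    · split_ifs with h <;> simp [h, Ideal.one_eq_top]
    · split_ifs with h
      · rw [h, Nat.sub_sub_self (mem_Icc.mp hk).2]
        exact ha k hk
      · exact zero_mem _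

theorem isIntegralDependence_one (I : Ideal R) : IsIntegralDependence I 0 (1 : R[X]) :=
  ⟨natDegree_one.le, coeff_one_zero, fun j => by simp [Ideal.one_eq_top]⟩

theorem isIntegralDependence_X (I : Ideal R) : IsIntegralDependence I 1 (X : R[X]) := by
  refine ⟨natDegree_X_le, coeff_X_one, fun j => ?_⟩
  rcases Nat.lt_or_ge j 1 with hj | hj
  · simp [Nat.lt_one_iff.mp hj]
  · simp [Nat.sub_eq_zero_of_le hj, Ideal.one_eq_top]

namespace IsIntegralDependence

variable {m d : ℕ} {f g : R[X]}

theorem mul (hf : IsIntegralDependence I m f) (hg : IsIntegralDependence I d g) :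
    IsIntegralDependence I (m + d) (f * g) := by
  obtain ⟨hfdeg, hfm, hfI⟩ := hf
  obtain ⟨hgdeg, hgd, hgI⟩ := hg
  refine ⟨natDegree_mul_le.trans (add_le_add hfdeg hgdeg), ?_, fun j => ?_⟩
  · rw [coeff_mul_add_eq_of_natDegree_le hfdeg hgdeg, hfm, hgd, one_mul]
  · rw [coeff_mul]
    refine Ideal.sum_mem _ fun ⟨i, k⟩ hmem => ?_
    have hsum : i + k = j := mem_antidiagonal.mp hmem
    have hmul : f.coeff i * g.coeff k ∈ I ^ (m - i + (d - k)) :=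
      pow_add I _ _ ▸ Ideal.mul_mem_mul (hfI i) (hgI k)
    exact Ideal.pow_le_pow_right (by omega) hmul

theorem pow (hf : IsIntegralDependence I m f) (N : ℕ) :
    IsIntegralDependence I (N * m) (f ^ N) := by
  induction N with
  | zero => simpa using isIntegralDependence_one I
  | succ N ih => simpa [pow_succ, Nat.succ_mul] using ih.mul hf

theorem prod {ι : Type*} (s : Finset ι) {m : ι → ℕ} {f : ι → R[X]}
    (hf : ∀ i ∈ s, IsIntegralDependence I (m i) (f i)) :
    IsIntegralDependence I (∑ i ∈ s, m i) (∏ i ∈ s, f i) := by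
  classical
  induction s using Finset.induction with
  | empty => simpa using isIntegralDependence_one I
  | insert i s hi ih =>
    rw [prod_insert hi, sum_insert hi]
    exact (hf i (mem_insert_self i s)).mul (ih fun j hj => hf j (mem_insert_of_mem hj))

theorem eval_eq (hf : IsIntegralDependence I m f) (x : R) :
    f.eval x = x ^ m + ∑ k ∈ Icc 1 m, f.coeff (m - k) * x ^ (m - k) := by
  rw [eval_eq_sum_range' (Nat.lt_succ_of_le hf.1), sum_range_succ, hf.2.1, one_mul, add_comm,
    sum_Icc_one_sub_eq_sum_range (fun j => f.coeff j * x ^ j)]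

theorem mem_intClosure (hm : 0 < m) (hf : IsIntegralDependence I m f) {x : R}
    (hx : f.eval x = 0) : x ∈ I.intClosure := by
  refine ⟨m, hm, fun k => f.coeff (m - k), fun k hk => ?_, hf.eval_eq x ▸ hx⟩
  simpa [Nat.sub_sub_self (mem_Icc.mp hk).2] using hf.2.2 (m - k)

/-- If `f(x) ^ N = 0`, then `X * f ^ N` is a relation of positive degree vanishing at `x`. -/
theorem mem_intClosure_of_isNilpotent_eval (hf : IsIntegralDependence I m f) {x : R}
    (hx : IsNilpotent (f.eval x)) : x ∈ I.intClosure := by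
  obtain ⟨N, hN⟩ := hx
  refine ((isIntegralDependence_X I).mul (hf.pow N)).mem_intClosure (by omega) ?_
  rw [eval_mul, eval_pow, hN, mul_zero]

end IsIntegralDependence

end Polynomial

/-- If `J₁ ⋯ Jₙ` is a nil ideal and `x` is integral over `I` modulo each `Jᵢ`
(i.e. there is a monic polynomial with coefficients `aₖ ∈ I^k` whose value at `x`
lies in `Jᵢ`), then `x` is integral over `I`. -/
theorem mem_intClosure_of_integral_mod {R : Type*} [CommRing R] (I : Ideal R)
    {n : ℕ} (J : Fin n → Ideal R) (hnil : (∏ i, J i) ≤ nilradical R) (x : R)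
    (hx : ∀ i, ∃ m : ℕ, 0 < m ∧ ∃ a : ℕ → R, (∀ k ∈ Finset.Icc 1 m, a k ∈ I ^ k) ∧
      x ^ m + ∑ k ∈ Finset.Icc 1 m, a k * x ^ (m - k) ∈ J i) :
    x ∈ I.intClosure := by
  choose m _ a ha hJ using hx
  choose f hf hfx using fun i => exists_isIntegralDependence_eval_eq (ha i) x
  have hprod : (∏ i, f i).eval x ∈ ∏ i, J i := by
    rw [eval_prod]
    exact Ideal.prod_mem_prod fun i _ => hfx i ▸ hJ i
  exact (IsIntegralDependence.prod univ fun i _ => hf i).mem_intClosure_of_isNilpotent_eval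
    (hnil hprod)
end

section
/- If h : S → T is an integral ring morphism with ker h a nil ideal of S, then for every ideal I of S, the integral closure of I in S equals h^{-1} of the integral closure of the ideal I·T in T. -/
/-!
An element `x` is integral over `I` iff `x t` is integral over the Rees algebra `S[It] ⊆ S[t]`.
As `T` is integral over `S`, the Rees algebra `T[(IT)t]` is integral over `S[It]`, so if `h x` is
integral over `IT` then `h(x) t` is integral over `S[It]`. For a monic `Q` over `S[It]` killing
`h(x) t`, the element `Q(x t)` lies in the kernel of `S[t] → T[t]`; its coefficients lie in
`ker h`, so it is nilpotent and some power of `Q` kills `x t`.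
-/

open Polynomial

namespace RingHom

variable {R A B : Type*} [CommRing R] [CommRing A] [CommRing B]

theorem IsIntegralElem.comp_of_isIntegral {f : R →+* A} {g : A →+* B} (hf : f.IsIntegral)
    {x : B} (hx : g.IsIntegralElem x) : (g.comp f).IsIntegralElem x :=
  let _ := f.toAlgebra; let _ := g.toAlgebra; let _ := (g.comp f).toAlgebra
  have : IsScalarTower R A B := .of_algebraMap_eq fun _ ↦ rfl
  have : Algebra.IsIntegral R A := ⟨hf⟩
  isIntegral_trans (R := R) (A := A) x hx

theorem IsIntegralElem.of_map_of_ker_le_nilradical {f : R →+* A} {g : A →+* B}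
    (hg : ker g ≤ nilradical A) {x : A} (hx : (g.comp f).IsIntegralElem (g x)) :
    f.IsIntegralElem x := by
  obtain ⟨p, hp, hpx⟩ := hx
  have hker : p.eval₂ f x ∈ ker g := by rwa [mem_ker, hom_eval₂]
  obtain ⟨k, hk⟩ := mem_nilradical.mp (hg hker)
  exact ⟨p ^ k, hp.pow k, by rw [eval₂_pow, hk]⟩

end RingHom

theorem Polynomial.ker_mapRingHom_le_nilradical {S T : Type*} [CommRing S] [CommRing T]
    {h : S →+* T} (hker : RingHom.ker h ≤ nilradical S) :
    RingHom.ker (mapRingHom h) ≤ nilradical S[X] := fun p hp ↦ by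
  refine mem_nilradical.mpr (Polynomial.isNilpotent_iff.mpr fun i ↦ mem_nilradical.mp (hker ?_))
  rw [RingHom.mem_ker] at hp ⊢
  rw [← coeff_map, ← coe_mapRingHom, hp, coeff_zero]

theorem Polynomial.coeff_eval_monomial_one {S : Type*} [CommRing S] {p : S[X][X]} {n : ℕ}
    (hp : p.natDegree ≤ n) (x : S) :
    (p.eval (monomial 1 x)).coeff n =
      ∑ i ∈ Finset.range (n + 1), (p.coeff (n - i)).coeff i * x ^ (n - i) := by
  rw [eval_eq_sum_range' (Nat.lt_add_one_iff.mpr hp), finsetSum_coeff, ← Finset.sum_range_reflect]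
  refine Finset.sum_congr rfl fun i hi ↦ ?_
  have hin : i + (n - i) = n := Nat.add_sub_cancel' (Nat.lt_succ_iff.mp (Finset.mem_range.mp hi))
  rw [Nat.add_sub_cancel, monomial_pow, one_mul]
  simpa only [hin] using coeff_mul_monomial (p.coeff (n - i)) (n - i) i (x ^ (n - i))

theorem reesAlgebra_map_eq_adjoin_monomial {S T : Type*} [CommRing S] [CommRing T] (h : S →+* T)
    (I : Ideal S) :
    reesAlgebra (I.map h) = Algebra.adjoin T (monomial 1 '' (h '' I)) := by
  rw [← adjoin_monomial_eq_reesAlgebra, Ideal.map, Submodule.map_span, Algebra.adjoin_span,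
    ← Set.image_comp]

namespace reesAlgebra

variable {S T : Type*} [CommRing S] [CommRing T] (h : S →+* T) (I : Ideal S)

noncomputable def map : reesAlgebra I →+* reesAlgebra (I.map h) :=
  ((mapRingHom h).comp (algebraMap (reesAlgebra I) S[X])).codRestrict
    (reesAlgebra (I.map h)) fun p i ↦ by
      rw [RingHom.comp_apply, coe_mapRingHom, coeff_map, ← Ideal.map_pow]
      exact Ideal.mem_map_of_mem h (p.2 i)

theorem map_isIntegral (hint : h.IsIntegral) : (map h I).IsIntegral := by
  intro t
  refine RingHom.IsIntegralElem.of_map (g := algebraMap _ T[X]) Subtype.val_injective ?_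
  change ((mapRingHom h).comp (algebraMap (reesAlgebra I) S[X])).IsIntegralElem (t : T[X])
  have ht : (t : T[X]) ∈ (Algebra.adjoin T (monomial 1 '' (h '' I))).toSubring := by
    rw [← reesAlgebra_map_eq_adjoin_monomial]; exact t.2
  rw [Algebra.adjoin_eq_ring_closure] at ht
  refine IsIntegral.of_mem_closure'' _ ?_ _ ht
  rintro _ (⟨s, rfl⟩ | ⟨_, ⟨a, ha, rfl⟩, rfl⟩)
  · refine RingHom.IsIntegralElem.of_comp (f := algebraMap S (reesAlgebra I)) ?_
    have hC : ((mapRingHom h).comp (algebraMap (reesAlgebra I) S[X])).comp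
        (algebraMap S (reesAlgebra I)) = C.comp h := by
      ext; simp
    rw [hC]
    exact (hint s).map C
  · have hmem : monomial 1 a ∈ reesAlgebra I := reesAlgebra.monomial_mem.mpr (by simpa using ha)
    simpa using ((mapRingHom h).comp (algebraMap (reesAlgebra I) S[X])).isIntegralElem_map
      (x := ⟨monomial 1 a, hmem⟩)

end reesAlgebra

namespace Ideal

variable {S : Type*} [CommRing S] {I : Ideal S} {x : S}

theorem intClosure_subset_preimage_map {T : Type*} [CommRing T] (h : S →+* T) :
    I.intClosure ⊆ h ⁻¹' (I.map h).intClosure := by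
  rintro x ⟨n, hn, a, ha, hax⟩
  refine ⟨n, hn, fun i ↦ h (a i), fun i hi ↦ ?_, ?_⟩
  · rw [← Ideal.map_pow]
    exact mem_map_of_mem h (ha i hi)
  · simpa only [map_add, map_pow, map_sum, map_mul, map_zero] using congrArg h hax

theorem isIntegral_monomial_one_of_mem_intClosure (hx : x ∈ I.intClosure) :
    IsIntegral (reesAlgebra I) (monomial 1 x : S[X]) := by
  obtain ⟨n, -, a, ha, hax⟩ := hx
  set p : S[X][X] := X ^ n + ∑ i ∈ Finset.Icc 1 n, C (monomial i (a i)) * X ^ (n - i)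
  have hmonic : p.Monic := by
    refine monic_X_pow_add <| (degree_sum_le _ _).trans_lt <|
      (Finset.sup_lt_iff (WithBot.bot_lt_coe n)).mpr fun i hi ↦
        (degree_C_mul_X_pow_le _ _).trans_lt (WithBot.coe_lt_coe.mpr ?_)
    rw [Nat.cast_id]
    have := Finset.mem_Icc.mp hi
    omega
  have hlifts : p ∈ lifts (algebraMap (reesAlgebra I) S[X]) := by
    refine add_mem (X_pow_mem_lifts _ n) (_root_.sum_mem fun i hi ↦ ?_)
    refine mul_mem ?_ (X_pow_mem_lifts _ _)
    exact C'_mem_lifts ⟨⟨_, reesAlgebra.monomial_mem.mpr (ha i hi)⟩, rfl⟩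
  have heval :
      p.eval (monomial 1 x) = monomial n (x ^ n + ∑ i ∈ Finset.Icc 1 n, a i * x ^ (n - i)) := by
    simp only [p, eval_add, eval_pow, eval_X, eval_finsetSum, eval_mul, eval_C, monomial_pow,
      monomial_mul_monomial, one_mul, map_add, map_sum]
    congr 1
    refine Finset.sum_congr rfl fun i hi ↦ ?_
    rw [Nat.add_sub_cancel' (Finset.mem_Icc.mp hi).2]
  obtain ⟨q, hqp, -, hq⟩ := lifts_and_natDegree_eq_and_monic hlifts hmonic
  exact ⟨q, hq, by rw [← eval_map, hqp, heval, hax, map_zero]⟩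

theorem mem_intClosure_of_aeval_monomial_one_eq_zero {q : (reesAlgebra I)[X]} {n : ℕ}
    (hn : 0 < n) (hdeg : q.natDegree ≤ n) (hlead : q.coeff n = 1)
    (hq : aeval (monomial 1 x) q = 0) :
    x ∈ I.intClosure := by
  have hcoeff := congrArg (coeff · n) hq
  simp only [aeval_def, ← eval_map, coeff_zero] at hcoeff
  rw [coeff_eval_monomial_one (natDegree_map_le.trans hdeg), Finset.range_eq_Ico,
    Finset.sum_eq_sum_Ico_succ_bot n.succ_pos, Nat.succ_eq_add_one, zero_add,
    Finset.Ico_add_one_right_eq_Icc] at hcoeff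
  refine ⟨n, hn, fun i ↦ (q.coeff (n - i) : S[X]).coeff i, fun i _ ↦ (q.coeff (n - i)).2 i,
    ?_⟩
  simpa [hlead] using hcoeff

theorem mem_intClosure_iff_isIntegral_monomial_one :
    x ∈ I.intClosure ↔ IsIntegral (reesAlgebra I) (monomial 1 x : S[X]) := by
  refine ⟨isIntegral_monomial_one_of_mem_intClosure, fun ⟨q, hq, hqx⟩ ↦ ?_⟩
  -- multiplying by `X` makes the degree positive
  refine mem_intClosure_of_aeval_monomial_one_eq_zero (q := q * X) q.natDegree.succ_pos
    (natDegree_mul_le.trans (Nat.add_le_add_left natDegree_X_le _)) ?_ ?_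
  · rw [coeff_mul_X, hq.coeff_natDegree]
  · rw [map_mul, aeval_def, hqx, zero_mul]

end Ideal

/-- If `h : S → T` is an integral ring morphism with nil kernel, then for every ideal
`I` of `S`, the integral closure of `I` equals the preimage under `h` of the
integral closure of the ideal `I·T`. -/
theorem intClosure_eq_preimage_of_integral {S T : Type*} [CommRing S] [CommRing T]
    (h : S →+* T) (hint : h.IsIntegral)
    (hker : RingHom.ker h ≤ nilradical S) (I : Ideal S) :
    I.intClosure = h ⁻¹' (I.map h).intClosure := by
  refine (I.intClosure_subset_preimage_map h).antisymm fun x hx ↦ ?_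
  have hT : (algebraMap (reesAlgebra (I.map h)) T[X]).IsIntegralElem (monomial 1 (h x)) :=
    Ideal.mem_intClosure_iff_isIntegral_monomial_one.mp hx
  have hS : ((mapRingHom h).comp (algebraMap (reesAlgebra I) S[X])).IsIntegralElem
      (mapRingHom h (monomial 1 x)) := by
    rw [coe_mapRingHom, map_monomial]
    exact hT.comp_of_isIntegral (reesAlgebra.map_isIntegral h I hint)
  exact Ideal.mem_intClosure_iff_isIntegral_monomial_one.mpr
    (hS.of_map_of_ker_le_nilradical (ker_mapRingHom_le_nilradical hker))
end

section
/- If R → A →g B are commutative ring morphisms with g integral, then the relative Lipschitz saturation A*_{B,R} is a radicial A-algebra; equivalently, for every x ∈ A*_{B,R}, the element x ⊗_A 1 − 1 ⊗_A x is nilpotent in A*_{B,R} ⊗_A A*_{B,R}. -/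
open TensorProduct

variable (R A B : Type*) [CommRing R] [CommRing A] [CommRing B]
  [Algebra R A] [Algebra R B] [Algebra A B] [IsScalarTower R A B]

/-! A tensor `y` in `S ⊗[A] S` is nilpotent as soon as every `A`-algebra map `φ` from
`S ⊗[A] S` to an algebraically closed field `K` kills it. For `y = x ⊗ 1 - 1 ⊗ x` this asks
that the two maps `S → K` induced by `φ` agree at `x`. Since `B` is integral over `S`, both
extend to `A`-algebra maps `U, V : B → K`. An equation of integral dependence of `x ⊗ 1 - 1 ⊗ x`
over the kernel of `B ⊗[R] B → B ⊗[A] B` makes `x ⊗ 1 - 1 ⊗ x` nilpotent in `B ⊗[A] B`, so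
its image `U x - V x` under `B ⊗[A] B → K` is nilpotent, hence zero. -/

theorem Ideal.mem_radical_of_mem_intClosure {S : Type*} [CommRing S] {I : Ideal S} {x : S}
    (hx : x ∈ I.intClosure) : x ∈ I.radical := by
  obtain ⟨n, -, a, ha, heq⟩ := hx
  refine ⟨n, ?_⟩
  rw [add_eq_zero_iff_eq_neg.mp heq]
  refine I.neg_mem_iff.mpr (I.sum_mem fun i hi => I.mul_mem_right _ ?_)
  exact Ideal.pow_le_self (Nat.one_le_iff_ne_zero.mp (Finset.mem_Icc.mp hi).1) (ha i hi)

variable {R A B} in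
theorem isNilpotent_tmul_sub_tmul_of_mem_lipSat {x : B} (hx : x ∈ lipSat R A B) :
    IsNilpotent (x ⊗ₜ[A] 1 - 1 ⊗ₜ[A] x : B ⊗[A] B) := by
  obtain ⟨n, hn⟩ := Ideal.mem_radical_of_mem_intClosure hx
  refine ⟨n, ?_⟩
  simpa [lipDelta, lipPhi] using RingHom.mem_ker.mp hn

variable {A B} in
theorem AlgHom.eq_of_isNilpotent_tmul_sub_tmul {K : Type*} [CommRing K] [IsReduced K]
    [Algebra A K] (U V : B →ₐ[A] K) {x : B}
    (hx : IsNilpotent (x ⊗ₜ[A] 1 - 1 ⊗ₜ[A] x : B ⊗[A] B)) : U x = V x := by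
  simpa [sub_eq_zero] using (hx.map (Algebra.TensorProduct.productMap U V)).eq_zero

theorem RingHom.exists_comp_algebraMap_eq_of_isIntegral {T B K : Type*} [CommRing T]
    [CommRing B] [Field K] [IsAlgClosed K] [Algebra T B] [Algebra.IsIntegral T B]
    [FaithfulSMul T B] (f : T →+* K) : ∃ U : B →+* K, U.comp (algebraMap T B) = f := by
  let p := RingHom.ker f
  have : p.IsPrime := RingHom.ker_isPrime f
  obtain ⟨⟨Q, _, _⟩⟩ := Ideal.nonempty_primesOver (S := B) p
  let : Algebra (T ⧸ p) K := (RingHom.kerLift f).toAlgebra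
  have : FaithfulSMul (T ⧸ p) K :=
    (faithfulSMul_iff_algebraMap_injective _ _).mpr (RingHom.kerLift_injective f)
  have := FaithfulSMul.to_isTorsionFree (T ⧸ p) K
  have := FaithfulSMul.to_isTorsionFree (T ⧸ p) (B ⧸ Q)
  let lift : B ⧸ Q →ₐ[T ⧸ p] K := IsAlgClosed.lift
  exact ⟨(lift : B ⧸ Q →+* K).comp (Ideal.Quotient.mk Q),
    RingHom.ext fun t => lift.commutes (Ideal.Quotient.mk p t)⟩

theorem AlgHom.exists_comp_toAlgHom_eq_of_isIntegral {A T B K : Type*} [CommRing A]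
    [CommRing T] [CommRing B] [Field K] [IsAlgClosed K] [Algebra A T] [Algebra A B]
    [Algebra A K] [Algebra T B] [IsScalarTower A T B] [Algebra.IsIntegral T B]
    [FaithfulSMul T B] (f : T →ₐ[A] K) :
    ∃ U : B →ₐ[A] K, U.comp (IsScalarTower.toAlgHom A T B) = f := by
  obtain ⟨U, hU⟩ := RingHom.exists_comp_algebraMap_eq_of_isIntegral (B := B) (f : T →+* K)
  refine ⟨⟨U, fun a => ?_⟩, AlgHom.coe_ringHom_injective hU⟩
  rw [IsScalarTower.algebraMap_apply A T B]
  exact (RingHom.congr_fun hU _).trans (f.commutes a)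

universe u in
theorem isNilpotent_of_forall_algHom_isAlgClosed {A : Type*} {C : Type u} [CommRing A]
    [CommRing C] [Algebra A C] {y : C}
    (h : ∀ (K : Type u) [Field K] [IsAlgClosed K] [Algebra A K] (φ : C →ₐ[A] K), φ y = 0) :
    IsNilpotent y := by
  rw [← mem_nilradical, nilradical_eq_sInf, Ideal.mem_sInf]
  intro P (hP : P.IsPrime)
  let K := AlgebraicClosure (FractionRing (C ⧸ P))
  have hinj : Function.Injective (algebraMap (C ⧸ P) K) := by
    rw [IsScalarTower.algebraMap_eq (C ⧸ P) (FractionRing (C ⧸ P)) K]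
    exact (algebraMap (FractionRing (C ⧸ P)) K).injective.comp (IsFractionRing.injective _ _)
  let φ : C →+* K := (algebraMap (C ⧸ P) K).comp (Ideal.Quotient.mk P)
  let : Algebra A K := (φ.comp (algebraMap A C)).toAlgebra
  have hφ : φ y = 0 := h K ⟨φ, fun _ => rfl⟩
  rwa [RingHom.comp_apply, ← map_zero (algebraMap (C ⧸ P) K), hinj.eq_iff,
    Ideal.Quotient.eq_zero_iff_mem] at hφ

/-- Main theorem: if `g : A → B` is integral, the relative Lipschitz saturation
`A*_{B,R}` is a radicial `A`-algebra; equivalently, for every `x ∈ A*_{B,R}`, the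
element `x ⊗_A 1 - 1 ⊗_A x` is nilpotent in `A*_{B,R} ⊗_A A*_{B,R}`. -/
theorem lipSat_radicial [Algebra.IsIntegral A B]
    (S : Subalgebra A B) (hS : (S : Set B) = lipSat R A B) :
    ∀ x : S, IsNilpotent (x ⊗ₜ[A] 1 - 1 ⊗ₜ[A] x : S ⊗[A] S) := by
  intro x
  have hx := isNilpotent_tmul_sub_tmul_of_mem_lipSat (hS.subset x.2)
  have : Algebra.IsIntegral S B := Algebra.IsIntegral.tower_top A
  refine isNilpotent_of_forall_algHom_isAlgClosed (A := A) fun K _ _ _ φ => ?_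
  obtain ⟨U, hU⟩ := AlgHom.exists_comp_toAlgHom_eq_of_isIntegral (B := B)
    (φ.comp Algebra.TensorProduct.includeLeft)
  obtain ⟨V, hV⟩ := AlgHom.exists_comp_toAlgHom_eq_of_isIntegral (B := B)
    (φ.comp Algebra.TensorProduct.includeRight)
  have hUV : U x = V x := U.eq_of_isNilpotent_tmul_sub_tmul V hx
  rw [map_sub, sub_eq_zero]
  exact (AlgHom.congr_fun hU x).symm.trans (hUV.trans (AlgHom.congr_fun hV x))
end
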